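/- arXiv:0902.2086 — 2 statements merged into one kernel-verified Lean document; each statement's English description precedes it below -/
import Mathlib

section
/- Let λ₁, λ₂, μ > 0 and let z₂ be a complex number with |z₂| < 1. Then the polynomial p(z) = λ₁z² − (λ₁ + λ₂(1 − z₂) + μ)z + μ has exactly one root z (counted with multiplicity) in the open unit disc |z| < 1. -/
open Polynomial in
open scoped Classical in
theorem stmt_2 (l1 l2 mu : ℝ) (h1 : 0 < l1) (h2 : 0 < l2) (h3 : 0 < mu)
    (z2 : ℂ) (hz2 : ‖z2‖ < 1) :
    Multiset.card
      ((C (l1 : ℂ) * X ^ 2 - C ((l1 : ℂ) + (l2 : ℂ) * (1 - z2) + (mu : ℂ)) * X + C (mu : ℂ)).roots.filter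
        (fun z => ‖z‖ < 1)) = 1 := by
  set a : ℂ := (l1 : ℂ) + (l2 : ℂ) * (1 - z2) + (mu : ℂ) with ha
  set p : ℂ[X] := C (l1 : ℂ) * X ^ 2 - C a * X + C (mu : ℂ) with hp
  have hl1 : (l1 : ℂ) ≠ 0 := by exact_mod_cast h1.ne'
  have hpform : p = C (l1 : ℂ) * X ^ 2 + C (-a) * X + C (mu : ℂ) := by
    rw [hp, map_neg]; ring
  have hdeg : p.natDegree = 2 := by rw [hpform]; exact natDegree_quadratic hl1
  have hcard : Multiset.card p.roots = 2 := by
    rw [← hdeg]; exact (splits_iff_card_roots).mp (IsAlgClosed.splits p)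
  obtain ⟨r₁, r₂, hr⟩ := Multiset.card_eq_two.mp hcard
  have hlc : p.leadingCoeff = (l1 : ℂ) := by
    rw [Polynomial.leadingCoeff, hdeg, hpform]
    simp [coeff_add, coeff_C_mul, coeff_X_pow]
  have hfac : p = C (l1 : ℂ) * ((X - C r₁) * (X - C r₂)) := by
    conv_lhs => rw [← C_leadingCoeff_mul_prod_multiset_X_sub_C (p := p) (by rw [hcard, hdeg])]
    rw [hlc, hr]
    simp [Multiset.map_cons, Multiset.prod_cons]
  -- evaluate to get Vieta
  have heval : ∀ z : ℂ, l1 * z ^ 2 - a * z + mu = l1 * ((z - r₁) * (z - r₂)) := by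
    intro z
    have := congrArg (Polynomial.eval z) hfac
    simpa [hp, ha] using this
  have hprod : (mu : ℂ) = l1 * (r₁ * r₂) := by have := heval 0; simpa using this
  have hsum : a = l1 * (r₁ + r₂) := by
    have e1 := heval 1
    have em := heval (-1)
    have : l1 * ((1 - r₁) * (1 - r₂)) - l1 * ((-1 - r₁) * (-1 - r₂)) = (l1 - a + mu) - (l1 + a + mu) := by
      rw [← e1, ← em]; ring
    have h2 : l1 * (-2 * (r₁ + r₂)) = -2 * a := by linear_combination this
    field_simp at h2 ⊢
    linear_combination h2
  -- real part bound
  have hre : (l1 + mu : ℝ) < a.re := by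
    have hz2re : z2.re < 1 := lt_of_le_of_lt (le_trans (le_abs_self _) (Complex.abs_re_le_norm z2)) hz2
    have : a.re = l1 + l2 * (1 - z2.re) + mu := by
      simp [ha, Complex.add_re, Complex.mul_re, Complex.sub_re, Complex.ofReal_re, Complex.ofReal_im]
    rw [this]; nlinarith
  have habs : (l1 + mu : ℝ) < ‖a‖ := lt_of_lt_of_le hre (Complex.re_le_norm a)
  set A : ℂ → ℝ := (norm : ℂ → ℝ)
  have key : A (r₁ + r₂) * l1 > (1 + A r₁ * A r₂) * l1 := by
    have h1' : A a = l1 * A (r₁ + r₂) := by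
      rw [hsum]; simp [A, norm_mul, Complex.norm_real, abs_of_pos h1]
    have h2' : (mu : ℝ) = l1 * (A r₁ * A r₂) := by
      have : A (mu : ℂ) = A ((l1 : ℂ)) * (A r₁ * A r₂) := by rw [hprod]; simp [A, norm_mul]
      simpa [A, Complex.norm_real, abs_of_pos h1, abs_of_pos h3] using this
    nlinarith [habs]
  have key2 : A (r₁ + r₂) > 1 + A r₁ * A r₂ := by
    have := mul_lt_mul_of_pos_right (show (1 + A r₁ * A r₂) < A (r₁ + r₂) from by nlinarith) h1
    nlinarith
  have htri : A (r₁ + r₂) ≤ A r₁ + A r₂ := norm_add_le _ _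
  -- exactly one root inside
  have hone : (A r₁ < 1 ∧ ¬ A r₂ < 1) ∨ (¬ A r₁ < 1 ∧ A r₂ < 1) := by
    by_cases c1 : A r₁ < 1 <;> by_cases c2 : A r₂ < 1
    · exfalso; nlinarith [norm_nonneg r₁, norm_nonneg r₂]
    · exact Or.inl ⟨c1, c2⟩
    · exact Or.inr ⟨c1, c2⟩
    · exfalso
      push_neg at c1 c2
      nlinarith
  rw [hr]
  rcases hone with ⟨c1, c2⟩ | ⟨c1, c2⟩ <;>
    simp [Multiset.filter_cons, Multiset.filter_singleton, c1, c2]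
end

section
/- Let λ₁, λ₂, μ > 0 with λ₁ < μ, and suppose f is twice differentiable at 1, f(1) = 1, and λ₁f(z)² − (λ₁ + λ₂(1 − z) + μ)f(z) + μ = 0 in a neighborhood of 1. Then f''(1) = 2μλ₂²/(μ − λ₁)³. -/
theorem stmt_4 (l1 l2 mu : ℝ) (h1 : 0 < l1) (h2 : 0 < l2) (h3 : 0 < mu) (h4 : l1 < mu)
    (f : ℝ → ℝ) (hf : ContDiffAt ℝ 2 f 1) (hf1 : f 1 = 1)
    (heq : ∀ᶠ z in nhds 1, l1 * f z ^ 2 - (l1 + l2 * (1 - z) + mu) * f z + mu = 0) :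
    deriv (deriv f) 1 = 2 * mu * l2 ^ 2 / (mu - l1) ^ 3 := by
  have hml : mu - l1 ≠ 0 := by linarith
  -- f is differentiable eventually near 1
  have hev : ∀ᶠ z in nhds (1:ℝ), DifferentiableAt ℝ f z := by
    filter_upwards [hf.eventually (by norm_num)] with z hz
    exact hz.differentiableAt (by norm_num)
  -- deriv f is differentiable at 1
  have hd2 : DifferentiableAt ℝ (deriv f) 1 := by
    have h1' : ContDiffAt ℝ 1 (fderiv ℝ f) 1 := hf.fderiv_right (by norm_num)
    have : DifferentiableAt ℝ (fun x => (fderiv ℝ f x) 1) 1 :=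
      (h1'.differentiableAt (by norm_num)).clm_apply (differentiableAt_const _)
    simpa [fderiv_apply_one_eq_deriv] using this
  set a := deriv f 1 with ha
  set b := deriv (deriv f) 1 with hb
  have hfd : HasDerivAt f a 1 := (hev.self_of_nhds).hasDerivAt
  have hfd' : HasDerivAt (deriv f) b 1 := hd2.hasDerivAt
  -- first derivative identity eventually
  have hder : ∀ᶠ z in nhds (1:ℝ),
      2 * l1 * f z * deriv f z + l2 * f z - (l1 + l2 * (1 - z) + mu) * deriv f z = 0 := by
    have h0 : deriv (fun z => l1 * f z ^ 2 - (l1 + l2 * (1 - z) + mu) * f z + mu) =ᶠ[nhds (1:ℝ)]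
        deriv (fun _ : ℝ => (0:ℝ)) := by
      apply Filter.EventuallyEq.deriv
      exact heq
    filter_upwards [h0, hev] with z hz hdz
    have hc : HasDerivAt (fun z : ℝ => l1 + l2 * (1 - z) + mu) (-l2) z := by
      have : HasDerivAt (fun z : ℝ => l1 + l2 * (1 - z) + mu) (0 + l2 * (0 - 1) + 0) z := by
        exact ((hasDerivAt_const z l1).add (((hasDerivAt_const z (1:ℝ)).sub
          (hasDerivAt_id z)).const_mul l2)).add (hasDerivAt_const z mu)
      simpa using this
    have hg := (((hdz.hasDerivAt.pow 2).const_mul l1).sub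
        (hc.mul hdz.hasDerivAt)).add_const mu
    have h2 : deriv (fun z => l1 * f z ^ 2 - (l1 + l2 * (1 - z) + mu) * f z + mu) z = _ :=
      hg.deriv
    rw [hz] at h2
    simp only [deriv_const] at h2
    norm_num at h2
    nlinarith [h2]
  -- value of a
  have hA : 2 * l1 * a + l2 - (l1 + mu) * a = 0 := by
    have := hder.self_of_nhds
    rw [hf1] at this
    simpa using this
  have haval : a = l2 / (mu - l1) := by
    field_simp
    linarith
  -- second derivative identity at 1
  have hder2 : 2 * l1 * (a * a + 1 * b) + l2 * a - ((-l2) * a + (l1 + mu) * b) = 0 := by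
    have h0 : deriv (fun z =>
        2 * l1 * f z * deriv f z + l2 * f z - (l1 + l2 * (1 - z) + mu) * deriv f z) 1
        = deriv (fun _ : ℝ => (0:ℝ)) 1 := by
      apply Filter.EventuallyEq.deriv_eq
      exact hder
    have hc : HasDerivAt (fun z : ℝ => l1 + l2 * (1 - z) + mu) (-l2) 1 := by
      have : HasDerivAt (fun z : ℝ => l1 + l2 * (1 - z) + mu) (0 + l2 * (0 - 1) + 0) 1 := by
        exact ((hasDerivAt_const 1 l1).add (((hasDerivAt_const (1:ℝ) (1:ℝ)).sub
          (hasDerivAt_id 1)).const_mul l2)).add (hasDerivAt_const 1 mu)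
      simpa using this
    have hg : HasDerivAt (fun z =>
        2 * l1 * f z * deriv f z + l2 * f z - (l1 + l2 * (1 - z) + mu) * deriv f z)
        (((2 * l1) * a * deriv f 1 + (2 * l1) * f 1 * b) + l2 * a
          - ((-l2) * deriv f 1 + (l1 + l2 * (1 - 1) + mu) * b)) 1 := by
      have t1 : HasDerivAt (fun z => 2 * l1 * f z) ((2 * l1) * a) 1 := hfd.const_mul _
      exact ((t1.mul hfd').add (hfd.const_mul l2)).sub (hc.mul hfd')
    have := hg.deriv
    rw [h0] at this
    simp only [deriv_const] at this
    rw [hf1] at this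
    simp only [sub_self, mul_zero, add_zero] at this
    nlinarith [this]
  -- solve for b
  have hb' : (mu - l1) * b = 2 * l1 * a * a + 2 * l2 * a := by nlinarith [hder2]
  rw [haval] at hb'
  field_simp at hb' ⊢
  nlinarith [hb', sq_nonneg (mu - l1)]
end
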